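/- Let h : (0,∞) → ℝ be differentiable and suppose that the function t ↦ h'(t)/t³ is nonincreasing on (0,∞). Then for every t > 0 one has h(t) ≤ h(1) + ((t⁴ − 1)/4)·h'(1). -/

import Mathlib

open Set

/-!
Put `g(s) = h(s) - s^(n+1)/(n+1) · h'(1)` (here `n = 3`). Then `g'(s) = sⁿ (h'(s)/sⁿ - h'(1))`,
which is `≥ 0` for `s < 1` and `≤ 0` for `s > 1` since `h'(s)/sⁿ` is nonincreasing, so `g` is
maximal at `s = 1` on `(0, ∞)`, and `g(t) ≤ g(1)` is the claim.
-/

theorem isMaxOn_of_hasDerivAt_nonneg_of_nonpos {f f' : ℝ → ℝ} {a c : ℝ} (hac : a < c)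
    (hf : ∀ x ∈ Ioi a, HasDerivAt f (f' x) x)
    (hleft : ∀ x ∈ Ioo a c, 0 ≤ f' x) (hright : ∀ x ∈ Ioi c, f' x ≤ 0) :
    IsMaxOn f (Ioi a) c := by
  have hcont : ContinuousOn f (Ioi a) := fun x hx => (hf x hx).continuousAt.continuousWithinAt
  refine isMaxOn_iff.2 fun t ht => ?_
  rcases le_total t c with htc | hct
  · have hmono : MonotoneOn f (Ioc a c) :=
      monotoneOn_of_hasDerivWithinAt_nonneg (convex_Ioc a c) (hcont.mono Ioc_subset_Ioi_self)
        (fun x hx => by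
          rw [interior_Ioc] at hx
          exact (hf x hx.1).hasDerivWithinAt)
        (fun x hx => hleft x (by rwa [interior_Ioc] at hx))
    exact hmono ⟨ht, htc⟩ ⟨hac, le_rfl⟩ htc
  · have hanti : AntitoneOn f (Ici c) :=
      antitoneOn_of_hasDerivWithinAt_nonpos (convex_Ici c)
        (hcont.mono fun x hx => hac.trans_le hx)
        (fun x hx => by
          rw [interior_Ici] at hx
          exact (hf x (hac.trans hx)).hasDerivWithinAt)
        (fun x hx => hright x (by rwa [interior_Ici] at hx))
    exact hanti self_mem_Ici hct hct

theorem le_add_mul_of_antitoneOn_deriv_div_pow {h h' : ℝ → ℝ} (n : ℕ)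
    (hderiv : ∀ t ∈ Ioi (0 : ℝ), HasDerivAt h (h' t) t)
    (hmono : AntitoneOn (fun t => h' t / t ^ n) (Ioi 0)) {t : ℝ} (ht : 0 < t) :
    h t ≤ h 1 + ((t ^ (n + 1) - 1) / (n + 1)) * h' 1 := by
  set g : ℝ → ℝ := fun s => h s - s ^ (n + 1) / (n + 1) * h' 1
  have hg : ∀ s ∈ Ioi (0 : ℝ), HasDerivAt g (h' s - s ^ n * h' 1) s := fun s hs => by
    have hpow := ((hasDerivAt_pow (n + 1) s).div_const ((n : ℝ) + 1)).mul_const (h' 1)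
    refine ((hderiv s hs).sub hpow).congr_deriv ?_
    rw [Nat.add_sub_cancel]
    push_cast
    field_simp
  have hsign : ∀ s ∈ Ioi (0 : ℝ), h' s - s ^ n * h' 1 = s ^ n * (h' s / s ^ n - h' 1 / 1 ^ n) :=
    fun s hs => by
      have : s ^ n ≠ 0 := pow_ne_zero n (ne_of_gt hs)
      field_simp
      ring
  have hmax : IsMaxOn g (Ioi 0) 1 := isMaxOn_of_hasDerivAt_nonneg_of_nonpos one_pos hg
    (fun s hs => by
      rw [hsign s hs.1]
      exact mul_nonneg (pow_nonneg (le_of_lt hs.1) n)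
        (sub_nonneg.2 (hmono hs.1 (mem_Ioi.2 one_pos) hs.2.le)))
    (fun s hs => by
      have hs0 : (0 : ℝ) < s := one_pos.trans hs
      rw [hsign s hs0]
      exact mul_nonpos_of_nonneg_of_nonpos (pow_nonneg hs0.le n)
        (sub_nonpos.2 (hmono (mem_Ioi.2 one_pos) hs0 (le_of_lt hs))))
  have hgt : g t ≤ g 1 := isMaxOn_iff.1 hmax t ht
  simp only [g, one_pow] at hgt
  linear_combination hgt

theorem stmt7 (h h' : ℝ → ℝ)
    (hderiv : ∀ t ∈ Set.Ioi (0 : ℝ), HasDerivAt h (h' t) t)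
    (hmono : AntitoneOn (fun t => h' t / t ^ 3) (Set.Ioi 0)) :
    ∀ t > (0 : ℝ), h t ≤ h 1 + ((t ^ 4 - 1) / 4) * h' 1 := by
  intro t ht
  have hgen := le_add_mul_of_antitoneOn_deriv_div_pow 3 hderiv hmono ht
  norm_num at hgen
  exact hgen
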